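/- arXiv:2202.13948 — 10 statements merged into one kernel-verified Lean document; each statement's English description precedes it below -/
import Mathlib

section
/- Let c₀, r ∈ ℂ with r ≠ 0, and let f be the formal Laurent series whose n-th coefficient equals c₀ + n·r for every n ∈ ℤ. Then f has no inverse: there is no formal Laurent series g such that the product fg exists and equals S₁. -/
open Filter

/-- Two-sided convergence of `∑_{n∈ℤ} u n` to `L`: both one-sided series converge
and their limits add up to `L`. -/
def HasLSum (u : ℤ → ℂ) (L : ℂ) : Prop :=
  ∃ A B : ℂ,
    Tendsto (fun N : ℕ => ∑ n ∈ Finset.range N, u (-((n : ℤ) + 1))) atTop (nhds A) ∧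
    Tendsto (fun N : ℕ => ∑ n ∈ Finset.range N, u (n : ℤ)) atTop (nhds B) ∧
    L = A + B

/-- `LHasProd f g h` : the product of the formal Laurent series `f` and `g` exists and
equals `h`, i.e. for every `k` the two-sided series `∑_m f m * g (k - m)` converges to `h k`. -/
def LHasProd (f g h : ℤ → ℂ) : Prop :=
  ∀ k : ℤ, HasLSum (fun m => f m * g (k - m)) (h k)

/-- The unit formal Laurent series `S₁`. -/
def LOne : ℤ → ℂ := fun n => if n = 0 then 1 else 0

/-- `g` is an inverse of the formal Laurent series `f`: the product `fg` exists and equals `S₁`. -/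
def IsLInverse (f g : ℤ → ℂ) : Prop := LHasProd f g LOne

lemma HasLSum.congr {u v : ℤ → ℂ} {L : ℂ} (h : HasLSum u L) (he : ∀ m, u m = v m) :
    HasLSum v L := by
  have : u = v := funext he
  rwa [← this]

lemma HasLSum.unique {u : ℤ → ℂ} {L M : ℂ} (h1 : HasLSum u L) (h2 : HasLSum u M) : L = M := by
  obtain ⟨A, B, hA, hB, rfl⟩ := h1
  obtain ⟨A', B', hA', hB', rfl⟩ := h2
  rw [tendsto_nhds_unique hA hA', tendsto_nhds_unique hB hB']

lemma HasLSum.sub {u v : ℤ → ℂ} {L M : ℂ} (hu : HasLSum u L) (hv : HasLSum v M) :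
    HasLSum (fun m => u m - v m) (L - M) := by
  obtain ⟨A, B, hA, hB, rfl⟩ := hu
  obtain ⟨A', B', hA', hB', rfl⟩ := hv
  exact ⟨A - A', B - B',
    by simpa [Finset.sum_sub_distrib] using hA.sub hA',
    by simpa [Finset.sum_sub_distrib] using hB.sub hB', by ring⟩

lemma HasLSum.const_mul {u : ℤ → ℂ} {L : ℂ} (c : ℂ) (h : HasLSum u L) :
    HasLSum (fun m => c * u m) (c * L) := by
  obtain ⟨A, B, hA, hB, rfl⟩ := h
  exact ⟨c * A, c * B,
    by simpa [Finset.mul_sum] using hA.const_mul c,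
    by simpa [Finset.mul_sum] using hB.const_mul c, by ring⟩

lemma HasLSum.shift {u : ℤ → ℂ} {L : ℂ} (h : HasLSum u L) :
    HasLSum (fun m => u (m + 1)) L := by
  obtain ⟨A, B, hA, hB, hL⟩ := h
  refine ⟨A + u 0, B - u 0, ?_, ?_, by rw [hL]; ring⟩
  · rw [← tendsto_add_atTop_iff_nat 1]
    have heq : ∀ N : ℕ, (∑ n ∈ Finset.range (N + 1), u (-((n : ℤ) + 1) + 1))
        = (∑ n ∈ Finset.range N, u (-((n : ℤ) + 1))) + u 0 := by
      intro N
      rw [Finset.sum_range_succ' (fun n : ℕ => u (-((n : ℤ) + 1) + 1)) N]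
      congr 1
    simp only [heq]
    exact hA.add tendsto_const_nhds
  · have heq : ∀ N : ℕ, (∑ n ∈ Finset.range N, u ((n : ℤ) + 1))
        = (∑ n ∈ Finset.range (N + 1), u (n : ℤ)) - u 0 := by
      intro N
      rw [Finset.sum_range_succ' (fun n : ℕ => u (n : ℤ)) N]
      push_cast
      ring
    simp only [heq]
    have := (tendsto_add_atTop_iff_nat 1).mpr hB
    exact this.sub tendsto_const_nhds

/-- The formal Laurent series with arithmetic-progression coefficients `c₀ + n·r` (`r ≠ 0`)
has no inverse. -/
theorem stmt_1 (c₀ r : ℂ) (hr : r ≠ 0) :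
    ¬ ∃ g : ℤ → ℂ, IsLInverse (fun n : ℤ => c₀ + (n : ℂ) * r) g := by
  rintro ⟨g, hg⟩
  -- For each k, ∑_m g (k - m) converges to r⁻¹ * (LOne (k+1) - LOne k).
  have key : ∀ k : ℤ, HasLSum (fun m => g (k - m)) (r⁻¹ * (LOne (k + 1) - LOne k)) := by
    intro k
    have h1 := hg k
    have h2 := (hg (k + 1)).shift
    have h2' : HasLSum (fun m : ℤ => (c₀ + (m : ℂ) * r) * g (k - m) + r * g (k - m))
        (LOne (k + 1)) := by
      refine h2.congr fun m => ?_
      have : k + 1 - (m + 1) = k - m := by ring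
      rw [this]
      push_cast
      ring
    have h3 := h2'.sub h1
    have h4 : HasLSum (fun m => r * g (k - m)) (LOne (k + 1) - LOne k) :=
      h3.congr fun m => by ring
    have h5 := h4.const_mul r⁻¹
    refine h5.congr fun m => ?_
    rw [← mul_assoc, inv_mul_cancel₀ hr, one_mul]
  have key2 : ∀ k : ℤ, HasLSum (fun m => g (k - m)) (r⁻¹ * (LOne (k + 2) - LOne (k + 1))) := by
    intro k
    have h := (key (k + 1)).shift
    have e : k + 1 + 1 = k + 2 := by ring
    rw [e] at h
    refine h.congr fun m => ?_
    congr 1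
    ring
  have heq := (key (-1)).unique (key2 (-1))
  norm_num [LOne] at heq
  exact inv_ne_zero hr (by linear_combination heq / 2)
end

section
/- Let c₀ ∈ ℂ and q ∈ ℂ with q ≠ 0, and let f be the formal Laurent series whose n-th coefficient equals c₀·qⁿ for every n ∈ ℤ. Then f has no inverse: there is no formal Laurent series g such that the product fg exists and equals S₁. -/
open Filter

/-- The formal Laurent series with geometric coefficients `c₀·qⁿ` (`q ≠ 0`) has no inverse. -/
theorem stmt_2 (c₀ q : ℂ) (hq : q ≠ 0) :
    ¬ ∃ g : ℤ → ℂ, IsLInverse (fun n : ℤ => c₀ * q ^ n) g := by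
  rintro ⟨g, hg⟩
  obtain ⟨A, B, hA, hB, hAB⟩ := hg 0
  obtain ⟨A', B', hA', hB', hAB'⟩ := hg 1
  set u : ℤ → ℂ := fun m => c₀ * q ^ m * g (0 - m) with hu
  have key : ∀ m : ℤ, c₀ * q ^ m * g (1 - m) = q * u (m - 1) := by
    intro m
    have h1 : (0 : ℤ) - (m - 1) = 1 - m := by ring
    simp only [hu, h1]
    rw [zpow_sub_one₀ hq]
    field_simp
  -- limit of ∑_{n<N} u (-(n+1)-1)
  have T1 : Tendsto (fun N : ℕ => ∑ n ∈ Finset.range N, u (-((n : ℤ) + 1) - 1)) atTop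
      (nhds (A - u (-1))) := by
    have h2 : Tendsto (fun N : ℕ => ∑ n ∈ Finset.range (N + 1), u (-((n : ℤ) + 1))) atTop
        (nhds A) := hA.comp (tendsto_add_atTop_nat 1)
    have h3 : ∀ N : ℕ, ∑ n ∈ Finset.range (N + 1), u (-((n : ℤ) + 1))
        = (∑ n ∈ Finset.range N, u (-((n : ℤ) + 1) - 1)) + u (-1) := by
      intro N
      rw [Finset.sum_range_succ']
      congr 1
    simp only [h3] at h2
    have := h2.sub_const (u (-1))
    simpa using this
  -- limit of ∑_{n<N} u ((n:ℤ) - 1)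
  have T2 : Tendsto (fun N : ℕ => ∑ n ∈ Finset.range N, u ((n : ℤ) - 1)) atTop
      (nhds (B + u (-1))) := by
    rw [← tendsto_add_atTop_iff_nat 1]
    have h3 : ∀ N : ℕ, ∑ n ∈ Finset.range (N + 1), u ((n : ℤ) - 1)
        = (∑ n ∈ Finset.range N, u (n : ℤ)) + u (-1) := by
      intro N
      rw [Finset.sum_range_succ']
      congr 1
      apply Finset.sum_congr rfl
      intro n _
      congr 1
      push_cast
      ring
    simp only [h3]
    exact hB.add_const (u (-1))
  have eA : A' = q * (A - u (-1)) := by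
    have hA'2 : Tendsto (fun N : ℕ => q * ∑ n ∈ Finset.range N, u (-((n : ℤ) + 1) - 1)) atTop
        (nhds A') := by
      have h := hA'
      simp only [key] at h
      simpa only [← Finset.mul_sum] using h
    exact tendsto_nhds_unique hA'2 (T1.const_mul q)
  have eB : B' = q * (B + u (-1)) := by
    have hB'2 : Tendsto (fun N : ℕ => q * ∑ n ∈ Finset.range N, u ((n : ℤ) - 1)) atTop
        (nhds B') := by
      have h := hB'
      simp only [key] at h
      simpa only [← Finset.mul_sum] using h
    exact tendsto_nhds_unique hB'2 (T2.const_mul q)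
  have h0 : A + B = 1 := by
    have : LOne 0 = 1 := by simp [LOne]
    rw [this] at hAB; exact hAB.symm
  have h1 : A' + B' = 0 := by
    have : LOne 1 = 0 := by simp [LOne]
    rw [this] at hAB'; exact hAB'.symm
  rw [eA, eB] at h1
  apply hq
  calc q = q * (A + B) := by rw [h0, mul_one]
    _ = q * (A - u (-1)) + q * (B + u (-1)) := by ring
    _ = 0 := h1
end

section
/- Let f be the formal Laurent series whose n-th coefficient equals 1 for n ≥ 0 and 0 for n < 0. Then f has exactly one inverse, namely the series g = 1 − z, i.e. the formal Laurent series with coefficient 1 at index 0, coefficient −1 at index 1, and coefficient 0 at every other index. -/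
open Filter

lemma g0_eq (j : ℤ) :
    (if j = 0 then (1:ℂ) else if j = 1 then -1 else 0) = LOne j - LOne (j - 1) := by
  rcases eq_or_ne j 0 with rfl | h0
  · simp [LOne]
  · rcases eq_or_ne j 1 with rfl | h1
    · simp [LOne]
    · simp [LOne, h0, h1, sub_eq_zero]

lemma telescope (k : ℤ) (N : ℕ) :
    ∑ n ∈ Finset.range N, (LOne (k - n) - LOne (k - n - 1)) = LOne k - LOne (k - N) := by
  have h := Finset.sum_range_sub' (fun n : ℕ => LOne (k - n)) N
  simpa [Nat.cast_add, Nat.cast_one, sub_add_eq_sub_sub] using h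

/-- The formal Laurent series with coefficients `1` for `n ≥ 0` and `0` for `n < 0`
has exactly one inverse, namely `1 - z`. -/
theorem stmt_4 :
    IsLInverse (fun n : ℤ => if 0 ≤ n then 1 else 0)
      (fun n : ℤ => if n = 0 then 1 else if n = 1 then -1 else 0) ∧
    ∀ g : ℤ → ℂ, IsLInverse (fun n : ℤ => if 0 ≤ n then 1 else 0) g →
      g = fun n : ℤ => if n = 0 then 1 else if n = 1 then -1 else 0 := by
  have hneg : ∀ n : ℕ, ¬ (0:ℤ) ≤ -((n:ℤ)+1) := fun n => by omega
  constructor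
  · intro k
    refine ⟨0, LOne k, ?_, ?_, by simp⟩
    · simp only [hneg, if_false, zero_mul, Finset.sum_const_zero]
      exact tendsto_const_nhds
    · simp only [Int.natCast_nonneg, if_true, one_mul, g0_eq]
      apply tendsto_atTop_of_eventually_const (i₀ := k.toNat + 1)
      intro N hN
      rw [telescope]
      have h : k - (N : ℤ) ≠ 0 := by omega
      simp [LOne, h]
  · intro g hg
    have key : ∀ k : ℤ,
        Tendsto (fun N : ℕ => ∑ n ∈ Finset.range N, g (k - n)) atTop (nhds (LOne k)) := by
      intro k
      obtain ⟨A, B, hA, hB, hAB⟩ := hg k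
      simp only [hneg, if_false, zero_mul, Finset.sum_const_zero] at hA
      simp only [Int.natCast_nonneg, if_true, one_mul] at hB
      have hA0 : A = 0 := tendsto_nhds_unique hA tendsto_const_nhds
      have hBk : B = LOne k := by rw [hAB, hA0, zero_add]
      rwa [hBk] at hB
    funext k
    have h1 := (key k).comp (tendsto_add_atTop_nat 1)
    have h2 : Tendsto (fun N : ℕ => (∑ n ∈ Finset.range N, g (k - 1 - n)) + g k)
        atTop (nhds (LOne (k - 1) + g k)) := (key (k - 1)).add tendsto_const_nhds
    have heq : ∀ N : ℕ, ((fun N : ℕ => ∑ n ∈ Finset.range N, g (k - n)) ∘ (· + 1)) N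
        = (∑ n ∈ Finset.range N, g (k - 1 - n)) + g k := by
      intro N
      simp only [Function.comp_apply]
      rw [Finset.sum_range_succ']
      congr 1
      · apply Finset.sum_congr rfl
        intro n _
        congr 1
        push_cast
        ring
      · simp
    have huniq := tendsto_nhds_unique (h1.congr heq) h2
    have hgk : g k = LOne k - LOne (k - 1) := by linear_combination -huniq
    rw [hgk, ← g0_eq]
end

section
/- Let f be the formal Laurent series with coefficient 1 at index 0, coefficient −1 at index 1, and coefficient 0 at every other index (i.e. f = 1 − z). Then a formal Laurent series g = ∑_{n∈ℤ} b_n z^n is an inverse of f if and only if there exists c ∈ ℂ such that b_n = c for all n ≥ 0 and b_n = c − 1 for all n < 0. In particular, f has uncountably many distinct inverses. -/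
open Filter

def fOne : ℤ → ℂ := fun n : ℤ => if n = 0 then 1 else if n = 1 then -1 else 0

lemma key (g : ℤ → ℂ) (k : ℤ) (L : ℂ) :
    HasLSum (fun m => fOne m * g (k - m)) L ↔ L = g k - g (k - 1) := by
  have hneg : (fun N : ℕ => ∑ n ∈ Finset.range N,
      fOne (-((n : ℤ) + 1)) * g (k - (-((n : ℤ) + 1)))) = fun _ => (0:ℂ) := by
    funext N
    apply Finset.sum_eq_zero
    intro n _
    have h1 : (-((n : ℤ) + 1)) ≠ 0 := by omega
    have h2 : (-((n : ℤ) + 1)) ≠ 1 := by omega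
    unfold fOne
    rw [if_neg h1, if_neg h2, zero_mul]
  have hpos : ∀ N : ℕ, 2 ≤ N → ∑ n ∈ Finset.range N,
      fOne ((n : ℕ) : ℤ) * g (k - (n : ℤ)) = g k - g (k - 1) := by
    intro N hN
    rw [← Finset.sum_subset (Finset.range_subset_range.mpr hN)]
    · simp [Finset.sum_range_succ, fOne, sub_eq_add_neg]
    · intro n _ hn
      simp only [Finset.mem_range, not_lt] at hn
      have h1 : ((n:ℤ)) ≠ 0 := by omega
      have h2 : ((n:ℤ)) ≠ 1 := by omega
      unfold fOne
      rw [if_neg h1, if_neg h2, zero_mul]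
  constructor
  · rintro ⟨A, B, hA, hB, hL⟩
    have hA0 : A = 0 := by
      rw [hneg] at hA
      exact tendsto_nhds_unique hA tendsto_const_nhds
    have hB0 : B = g k - g (k - 1) := by
      refine tendsto_nhds_unique hB ?_
      refine Tendsto.congr' ?_ tendsto_const_nhds
      filter_upwards [eventually_ge_atTop 2] with N hN
      exact (hpos N hN).symm
    rw [hL, hA0, hB0, zero_add]
  · intro hL
    refine ⟨0, g k - g (k - 1), ?_, ?_, by rw [hL, zero_add]⟩
    · rw [hneg]; exact tendsto_const_nhds
    · refine Tendsto.congr' ?_ tendsto_const_nhds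
      filter_upwards [eventually_ge_atTop 2] with N hN
      exact (hpos N hN).symm

lemma inv_iff (g : ℤ → ℂ) :
    IsLInverse fOne g ↔
      ∃ c : ℂ, (∀ n : ℤ, 0 ≤ n → g n = c) ∧ (∀ n : ℤ, n < 0 → g n = c - 1) := by
  have hstep : IsLInverse fOne g ↔ ∀ k : ℤ, LOne k = g k - g (k - 1) := by
    unfold IsLInverse LHasProd
    exact forall_congr' fun k => key g k (LOne k)
  rw [hstep]
  constructor
  · intro h
    refine ⟨g 0, ?_, ?_⟩
    · refine Int.le_induction rfl ?_
      intro n _ ih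
      have hk := h (n + 1)
      have h0 : LOne (n + 1) = 0 := by unfold LOne; rw [if_neg (by omega)]
      rw [h0] at hk
      have he : n + 1 - 1 = n := by ring
      rw [he] at hk
      linear_combination ih - hk
    · intro n hn
      have key2 : ∀ m : ℤ, 1 ≤ m → g (-m) = g 0 - 1 := by
        refine Int.le_induction ?_ ?_
        · have hk := h 0
          have h0 : LOne 0 = 1 := by unfold LOne; rw [if_pos rfl]
          rw [h0] at hk
          have he : (0:ℤ) - 1 = -1 := by ring
          rw [he] at hk
          linear_combination hk
        · intro m _ ih
          have hk := h (-m)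
          have h0 : LOne (-m) = 0 := by unfold LOne; rw [if_neg (by omega)]
          rw [h0] at hk
          have he : -m - 1 = -(m + 1) := by ring
          rw [he] at hk
          linear_combination ih + hk
      have := key2 (-n) (by omega)
      simpa using this
  · rintro ⟨c, h0, h1⟩ k
    unfold LOne
    rcases lt_trichotomy k 0 with hk | hk | hk
    · rw [if_neg (by omega), h1 k hk, h1 (k - 1) (by omega)]; ring
    · subst hk
      rw [if_pos rfl, h0 0 le_rfl, h1 (0 - 1) (by omega)]; ring
    · rw [if_neg (by omega), h0 k (by omega), h0 (k - 1) (by omega)]; ring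

/-- The inverses of `f = 1 - z` are exactly the series that are constantly `c` on
nonnegative indices and constantly `c - 1` on negative indices; in particular `1 - z`
has uncountably many inverses. -/
theorem stmt_5 :
    (∀ g : ℤ → ℂ,
        IsLInverse (fun n : ℤ => if n = 0 then 1 else if n = 1 then -1 else 0) g ↔
          ∃ c : ℂ, (∀ n : ℤ, 0 ≤ n → g n = c) ∧ (∀ n : ℤ, n < 0 → g n = c - 1)) ∧
    ¬ (Set.Countable
        {g : ℤ → ℂ | IsLInverse (fun n : ℤ => if n = 0 then 1 else if n = 1 then -1 else 0) g}) := by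
  have hf : (fun n : ℤ => if n = 0 then (1:ℂ) else if n = 1 then -1 else 0) = fOne := rfl
  constructor
  · intro g; rw [hf]; exact inv_iff g
  · intro hc
    have himg : Set.Countable ((fun g : ℤ → ℂ => g 0) ''
        {g : ℤ → ℂ | IsLInverse (fun n : ℤ => if n = 0 then 1 else if n = 1 then -1 else 0) g}) :=
      hc.image _
    have huniv : (Set.univ : Set ℂ) ⊆ (fun g : ℤ → ℂ => g 0) ''
        {g : ℤ → ℂ | IsLInverse (fun n : ℤ => if n = 0 then 1 else if n = 1 then -1 else 0) g} := by
      intro c _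
      have hmem : IsLInverse fOne (fun n => if 0 ≤ n then c else c - 1) := by
        rw [inv_iff]
        exact ⟨c, fun n hn => by simp [hn], fun n hn => by simp [not_le.mpr hn]⟩
      rw [hf]
      exact ⟨fun n => if 0 ≤ n then c else c - 1, hmem, by simp⟩
    have : (Set.univ : Set ℂ).Countable := himg.mono huniv
    have hu : Uncountable ℂ := Complex.ofReal_injective.uncountable
    exact Set.not_countable_univ this
end

section
/- Let f be a formal Laurent series having two distinct inverses g₁ ≠ g₂. Then for all k₁, k₂ ∈ ℂ with k₁ + k₂ ≠ 0, the formal Laurent series (k₁g₁ + k₂g₂)/(k₁ + k₂) is also an inverse of f. Consequently, the set of inverses of f is infinite; in particular, a formal Laurent series cannot have a finite number of inverses greater than one. -/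
open Filter

lemma hasLSum_combo {u v : ℤ → ℂ} {L M : ℂ} (a b : ℂ)
    (hu : HasLSum u L) (hv : HasLSum v M) :
    HasLSum (fun n => a * u n + b * v n) (a * L + b * M) := by
  obtain ⟨A, B, hA, hB, hL⟩ := hu
  obtain ⟨A', B', hA', hB', hM⟩ := hv
  refine ⟨a * A + b * A', a * B + b * B', ?_, ?_, by rw [hL, hM]; ring⟩
  · simpa [Finset.sum_add_distrib, Finset.mul_sum] using
      ((hA.const_mul a).add (hA'.const_mul b))
  · simpa [Finset.sum_add_distrib, Finset.mul_sum] using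
      ((hB.const_mul a).add (hB'.const_mul b))

/-- If `f` has two distinct inverses `g₁ ≠ g₂`, then every convex-type combination
`(k₁g₁ + k₂g₂)/(k₁ + k₂)` with `k₁ + k₂ ≠ 0` is also an inverse of `f`; consequently the
set of inverses of `f` is infinite. -/
theorem stmt_6 (f g₁ g₂ : ℤ → ℂ) (h₁ : IsLInverse f g₁) (h₂ : IsLInverse f g₂)
    (hne : g₁ ≠ g₂) :
    (∀ k₁ k₂ : ℂ, k₁ + k₂ ≠ 0 →
        IsLInverse f (fun n : ℤ => (k₁ * g₁ n + k₂ * g₂ n) / (k₁ + k₂))) ∧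
    {g : ℤ → ℂ | IsLInverse f g}.Infinite := by
  have main : ∀ k₁ k₂ : ℂ, k₁ + k₂ ≠ 0 →
      IsLInverse f (fun n : ℤ => (k₁ * g₁ n + k₂ * g₂ n) / (k₁ + k₂)) := by
    intro k₁ k₂ hk k
    have h := hasLSum_combo (k₁ / (k₁ + k₂)) (k₂ / (k₁ + k₂)) (h₁ k) (h₂ k)
    have e1 : (fun m => (k₁ / (k₁ + k₂)) * (f m * g₁ (k - m)) +
        (k₂ / (k₁ + k₂)) * (f m * g₂ (k - m))) =
        (fun m => f m * ((k₁ * g₁ (k - m) + k₂ * g₂ (k - m)) / (k₁ + k₂))) := by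
      funext m; field_simp
    have e2 : (k₁ / (k₁ + k₂)) * LOne k + (k₂ / (k₁ + k₂)) * LOne k = LOne k := by
      field_simp
    rw [e1, e2] at h
    exact h
  refine ⟨main, ?_⟩
  apply Set.infinite_of_injective_forall_mem
    (f := fun t : ℂ => fun n : ℤ => (t * g₁ n + (1 - t) * g₂ n) / (t + (1 - t)))

  · intro s t hst
    by_contra hne'
    apply hne
    funext n
    have h := congrFun hst n
    simp only [add_sub_cancel, div_one] at h
    have hz : (s - t) * (g₁ n - g₂ n) = 0 := by linear_combination h
    rcases mul_eq_zero.1 hz with h' | h'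
    · exact absurd (sub_eq_zero.1 h') hne'
    · exact sub_eq_zero.1 h'
  · intro t
    exact main t (1 - t) (by norm_num)
end

section
/- The multiplication of formal Laurent series is not associative: there exist formal Laurent series f, g, h over ℂ such that all four products fg, (fg)h, gh, f(gh) exist, and (fg)h ≠ f(gh). -/
open Filter

lemma hasLSum_finset (u : ℤ → ℂ) (s : Finset ℤ) (hu : ∀ m, m ∉ s → u m = 0) :
    HasLSum u (∑ m ∈ s, u m) := by
  classical
  set N₀ := (s.sup fun m => m.natAbs) + 1 with hN₀def
  have hN₀ : ∀ m ∈ s, m.natAbs < N₀ := fun m hm => Nat.lt_succ_of_le (Finset.le_sup hm)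
  refine ⟨∑ m ∈ s.filter (fun m => m < 0), u m,
          ∑ m ∈ s.filter (fun m => ¬ m < 0), u m, ?_, ?_, ?_⟩
  · apply tendsto_atTop_of_eventually_const (i₀ := N₀)
    intro N hN
    have hinj : Set.InjOn (fun n : ℕ => -((n : ℤ) + 1)) (Finset.range N) := by
      intro a _ b _ hab; simpa using hab
    rw [← Finset.sum_image hinj]
    refine (Finset.sum_subset ?_ ?_).symm
    · intro m hm
      simp only [Finset.mem_filter] at hm
      simp only [Finset.mem_image, Finset.mem_range]
      refine ⟨(-m - 1).toNat, ?_, ?_⟩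
      · have := hN₀ m hm.1
        omega
      · have : m < 0 := hm.2
        omega
    · intro m hm hm'
      apply hu
      intro hms
      apply hm'
      simp only [Finset.mem_image, Finset.mem_range] at hm
      obtain ⟨n, _, rfl⟩ := hm
      exact Finset.mem_filter.mpr ⟨hms, by omega⟩
  · apply tendsto_atTop_of_eventually_const (i₀ := N₀)
    intro N hN
    have hinj : Set.InjOn (fun n : ℕ => (n : ℤ)) (Finset.range N) := by
      intro a _ b _ hab; simpa using hab
    rw [← Finset.sum_image hinj]
    refine (Finset.sum_subset ?_ ?_).symm
    · intro m hm
      simp only [Finset.mem_filter] at hm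
      simp only [Finset.mem_image, Finset.mem_range]
      refine ⟨m.toNat, ?_, ?_⟩
      · have := hN₀ m hm.1
        omega
      · have : ¬ m < 0 := hm.2
        omega
    · intro m hm hm'
      apply hu
      intro hms
      apply hm'
      simp only [Finset.mem_image, Finset.mem_range] at hm
      obtain ⟨n, _, rfl⟩ := hm
      exact Finset.mem_filter.mpr ⟨hms, by omega⟩
  · rw [Finset.sum_filter_add_sum_filter_not]

lemma hasLSum_congr {u : ℤ → ℂ} {L L' : ℂ} (h : HasLSum u L) (e : L = L') : HasLSum u L' :=
  e ▸ h

/-- Multiplication of formal Laurent series is not associative: there are `f, g, h` for which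
all products `fg`, `(fg)h`, `gh`, `f(gh)` exist while `(fg)h ≠ f(gh)`. -/
theorem stmt_7 :
    ∃ f g h fg gh p₁ p₂ : ℤ → ℂ,
      LHasProd f g fg ∧ LHasProd fg h p₁ ∧ LHasProd g h gh ∧ LHasProd f gh p₂ ∧ p₁ ≠ p₂ := by
  classical
  refine ⟨fun n => if 0 ≤ n then 1 else 0,
          fun n => if n = 0 then 1 else if n = 1 then -1 else 0,
          fun _ => 1, LOne, fun _ => 0, fun _ => 1, fun _ => 0,
          ?_, ?_, ?_, ?_, ?_⟩
  · -- f * g = LOne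
    intro k
    refine hasLSum_congr (hasLSum_finset _ ({k - 1, k} : Finset ℤ) ?_) ?_
    · intro m hm
      simp only [Finset.mem_insert, Finset.mem_singleton] at hm
      push_neg at hm
      have h1 : k - m ≠ 0 := by omega
      have h2 : k - m ≠ 1 := by omega
      simp [h1, h2]
    · have hne : (k - 1 : ℤ) ≠ k := by omega
      rw [Finset.sum_insert (by simp [hne]), Finset.sum_singleton]
      simp only [sub_sub_cancel, sub_self]
      rcases lt_trichotomy k 0 with hk | hk | hk
      · have h1 : ¬ (0 : ℤ) ≤ k - 1 := by omega
        have h2 : ¬ (0 : ℤ) ≤ k := by omega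
        have h3 : k ≠ 0 := by omega
        simp [h1, h2, h3, LOne, show k < 1 by omega]
      · subst hk
        norm_num [LOne]
      · have h1 : (0 : ℤ) ≤ k - 1 := by omega
        have h2 : (0 : ℤ) ≤ k := by omega
        have h3 : k ≠ 0 := by omega
        simp [h1, h2, h3, LOne, show (1 : ℤ) ≤ k by omega]
  · -- LOne * h = 1
    intro k
    refine hasLSum_congr (hasLSum_finset _ ({0} : Finset ℤ) ?_) ?_
    · intro m hm
      simp only [Finset.mem_singleton] at hm
      simp [LOne, hm]
    · simp [LOne]
  · -- g * h = 0
    intro k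
    refine hasLSum_congr (hasLSum_finset _ ({0, 1} : Finset ℤ) ?_) ?_
    · intro m hm
      simp only [Finset.mem_insert, Finset.mem_singleton] at hm
      push_neg at hm
      simp [hm.1, hm.2]
    · norm_num
  · -- f * 0 = 0
    intro k
    refine hasLSum_congr (hasLSum_finset _ (∅ : Finset ℤ) ?_) ?_
    · intro m _; simp
    · simp
  · intro hcontra
    have := congrFun hcontra 0
    norm_num at this
end

section
/- Let f, g, h be formal Laurent series over ℂ with coefficient sequences (f_s)_{s∈ℤ}, (g_t)_{t∈ℤ}, (h_u)_{u∈ℤ}, and suppose that the products fg, gh, (fg)h and f(gh) all exist. If for every n ∈ ℤ the doubly indexed family (f_s · g_{t−s} · h_{n−t})_{(s,t)∈ℤ×ℤ} is summable (unconditionally summable over ℤ×ℤ), then (fg)h = f(gh). -/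
open Filter

lemma hasLSum_eq_tsum {u : ℤ → ℂ} {L : ℂ} (hu : Summable u) (hL : HasLSum u L) :
    L = ∑' n, u n := by
  obtain ⟨A, B, hA, hB, hAB⟩ := hL
  have h1 : Summable (fun n : ℕ => u n) :=
    hu.comp_injective (fun a b hab => by exact_mod_cast hab)
  have h2 : Summable (fun n : ℕ => u (-((n : ℤ) + 1))) :=
    hu.comp_injective (fun a b hab => by omega)
  have hB' : B = ∑' n : ℕ, u n :=
    tendsto_nhds_unique hB h1.hasSum.tendsto_sum_nat
  have hA' : A = ∑' n : ℕ, u (-((n : ℤ) + 1)) :=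
    tendsto_nhds_unique hA h2.hasSum.tendsto_sum_nat
  have := (h1.hasSum.of_nat_of_neg_add_one h2.hasSum).tsum_eq
  rw [hAB, hA', hB', this, add_comm]

theorem stmt_8_aux (f g h fg gh p₁ p₂ : ℤ → ℂ)
    (hfg : ∀ k : ℤ, HasLSum (fun m => f m * g (k - m)) (fg k))
    (hgh : ∀ k : ℤ, HasLSum (fun m => g m * h (k - m)) (gh k))
    (hp₁ : ∀ k : ℤ, HasLSum (fun m => fg m * h (k - m)) (p₁ k))
    (hp₂ : ∀ k : ℤ, HasLSum (fun m => f m * gh (k - m)) (p₂ k))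
    (hsum : ∀ n : ℤ, Summable (fun st : ℤ × ℤ => f st.1 * g (st.2 - st.1) * h (n - st.2))) :
    p₁ = p₂ := by
  funext n
  set F : ℤ × ℤ → ℂ := fun st => f st.1 * g (st.2 - st.1) * h (n - st.2) with hF
  have hFsum : Summable F := hsum n
  -- p₂ side
  have key₂ : ∀ s : ℤ, f s * gh (n - s) = ∑' t, F (s, t) := by
    intro s
    by_cases hs : f s = 0
    · simp [hF, hs]
    · have hslice : Summable (fun t => F (s, t)) := hFsum.prod_factor s
      have hre : ∀ m : ℤ, F (s, m + s) = f s * (g m * h (n - s - m)) := by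
        intro m
        simp only [hF, add_sub_cancel_right]
        rw [show n - (m + s) = n - s - m by omega, mul_assoc]
      have hslice2 : Summable (fun m : ℤ => f s * (g m * h (n - s - m))) := by
        have h2 := hslice.comp_injective (Equiv.addRight s).injective
        exact h2.congr hre
      have hgsum : Summable (fun m : ℤ => g m * h (n - s - m)) :=
        (summable_mul_left_iff hs).mp hslice2
      have hgh' : gh (n - s) = ∑' m, g m * h (n - s - m) :=
        hasLSum_eq_tsum hgsum (hgh (n - s))
      calc f s * gh (n - s) = ∑' m, f s * (g m * h (n - s - m)) := by
            rw [hgh', hgsum.tsum_mul_left]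
        _ = ∑' m : ℤ, F (s, m + s) := tsum_congr fun m => (hre m).symm
        _ = ∑' t, F (s, t) := (Equiv.addRight s).tsum_eq fun t => F (s, t)
  have hfiber : ∀ s : ℤ, HasSum (fun t => F (s, t)) (f s * gh (n - s)) := by
    intro s
    rw [key₂ s]
    exact (hFsum.prod_factor s).hasSum
  have hp2sum : HasSum (fun s => f s * gh (n - s)) (∑' st, F st) :=
    hFsum.hasSum.prod_fiberwise hfiber
  have hp2 : p₂ n = ∑' st, F st :=
    (hasLSum_eq_tsum hp2sum.summable (hp₂ n)).trans hp2sum.tsum_eq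
  -- p₁ side
  set G : ℤ × ℤ → ℂ := fun ts => F (ts.2, ts.1) with hG
  have hGsum : Summable G := hFsum.prod_symm
  have key₁ : ∀ t : ℤ, fg t * h (n - t) = ∑' s, G (t, s) := by
    intro t
    by_cases ht : h (n - t) = 0
    · simp [hG, hF, ht]
    · have hslice : Summable (fun s => G (t, s)) := hGsum.prod_factor t
      have hfsum2 : Summable (fun s : ℤ => f s * g (t - s)) :=
        (summable_mul_right_iff ht).mp hslice
      have hfg' : fg t = ∑' s, f s * g (t - s) :=
        hasLSum_eq_tsum hfsum2 (hfg t)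
      rw [hfg', ← hfsum2.tsum_mul_right (h (n - t))]
  have hfiber' : ∀ t : ℤ, HasSum (fun s => G (t, s)) (fg t * h (n - t)) := by
    intro t
    rw [key₁ t]
    exact (hGsum.prod_factor t).hasSum
  have hp1sum : HasSum (fun t => fg t * h (n - t)) (∑' ts, G ts) :=
    hGsum.hasSum.prod_fiberwise hfiber'
  have hp1 : p₁ n = ∑' ts, G ts :=
    (hasLSum_eq_tsum hp1sum.summable (hp₁ n)).trans hp1sum.tsum_eq
  have : (∑' ts, G ts) = ∑' st, F st := (Equiv.prodComm ℤ ℤ).tsum_eq F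
  rw [hp1, hp2, this]

/-- If all the products `fg`, `gh`, `(fg)h`, `f(gh)` exist and for every `n` the family
`(f_s g_{t-s} h_{n-t})_{(s,t) ∈ ℤ×ℤ}` is (unconditionally) summable, then `(fg)h = f(gh)`. -/
theorem stmt_8 (f g h fg gh p₁ p₂ : ℤ → ℂ)
    (hfg : LHasProd f g fg) (hgh : LHasProd g h gh)
    (hp₁ : LHasProd fg h p₁) (hp₂ : LHasProd f gh p₂)
    (hsum : ∀ n : ℤ, Summable (fun st : ℤ × ℤ => f st.1 * g (st.2 - st.1) * h (n - st.2))) :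
    p₁ = p₂ := by
  exact stmt_8_aux f g h fg gh p₁ p₂ hfg hgh hp₁ hp₂ hsum
end

section
/- Let f = ∑_{n∈ℤ} c_n z^n be a formal Laurent series with c_n ∈ ℝ and c_n ≥ 0 for all n ∈ ℤ, and assume there exist n, m ∈ ℤ with n ≠ m such that c_n ≠ 0 and c_m ≠ 0. Suppose f has an inverse f⁻¹ = ∑_{n∈ℤ} d_n z^n with d_n ∈ ℝ for all n ∈ ℤ. Then there exists m ∈ ℤ such that d_m < 0. -/
open Filter

lemma hasLSum_re_le (w : ℤ → ℝ) (hw : ∀ n, 0 ≤ w n) {L : ℂ}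
    (h : HasLSum (fun n => (w n : ℂ)) L) (m : ℤ) : w m ≤ L.re := by
  obtain ⟨A, B, hA, hB, hL⟩ := h
  have hA' : Tendsto (fun N : ℕ => ∑ n ∈ Finset.range N, w (-((n:ℤ)+1))) atTop (nhds A.re) := by
    have := (Complex.continuous_re.tendsto A).comp hA
    simpa [Function.comp_def, Complex.re_sum] using this
  have hB' : Tendsto (fun N : ℕ => ∑ n ∈ Finset.range N, w (n:ℤ)) atTop (nhds B.re) := by
    have := (Complex.continuous_re.tendsto B).comp hB
    simpa [Function.comp_def, Complex.re_sum] using this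
  have hA0 : (0:ℝ) ≤ A.re :=
    ge_of_tendsto' hA' (fun N => Finset.sum_nonneg fun i _ => hw _)
  have hB0 : (0:ℝ) ≤ B.re :=
    ge_of_tendsto' hB' (fun N => Finset.sum_nonneg fun i _ => hw _)
  have hre : L.re = A.re + B.re := by rw [hL, Complex.add_re]
  rcases le_or_gt 0 m with hm | hm
  · have hmB : w m ≤ B.re := by
      refine ge_of_tendsto hB' ?_
      filter_upwards [eventually_ge_atTop (m.toNat + 1)] with N hN
      have hmem : m.toNat ∈ Finset.range N := Finset.mem_range.2 (by omega)
      have := Finset.single_le_sum (f := fun n : ℕ => w (n:ℤ)) (fun i _ => hw _) hmem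
      simpa [Int.toNat_of_nonneg hm] using this
    linarith
  · have hmA : w m ≤ A.re := by
      refine ge_of_tendsto hA' ?_
      filter_upwards [eventually_ge_atTop ((-m-1).toNat + 1)] with N hN
      have hmem : (-m-1).toNat ∈ Finset.range N := Finset.mem_range.2 (by omega)
      have := Finset.single_le_sum (f := fun n : ℕ => w (-((n:ℤ)+1))) (fun i _ => hw _) hmem
      have heq : -(((-m-1).toNat : ℤ) + 1) = m := by omega
      simpa only [heq] using this
    linarith

/-- If a real-coefficient formal Laurent series `f` has nonnegative coefficients, at least two
of which (at distinct indices) are nonzero, and `f` has an inverse with real coefficients `d`,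
then some coefficient `d m` is negative. -/
theorem stmt_9 (c d : ℤ → ℝ) (hnn : ∀ n : ℤ, 0 ≤ c n)
    (htwo : ∃ n m : ℤ, n ≠ m ∧ c n ≠ 0 ∧ c m ≠ 0)
    (hinv : IsLInverse (fun n : ℤ => (c n : ℂ)) (fun n : ℤ => (d n : ℂ))) :
    ∃ m : ℤ, d m < 0 := by
  by_contra hcon
  push_neg at hcon
  obtain ⟨n₁, n₂, hne, h1, h2⟩ := htwo
  have hc1 : 0 < c n₁ := (hnn n₁).lt_of_ne (Ne.symm h1)
  have hc2 : 0 < c n₂ := (hnn n₂).lt_of_ne (Ne.symm h2)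
  have hprod : ∀ k : ℤ, HasLSum (fun m => ((c m * d (k - m) : ℝ) : ℂ)) (LOne k) := by
    intro k
    have := hinv k
    simpa [Complex.ofReal_mul] using this
  have hwnn : ∀ k m : ℤ, 0 ≤ c m * d (k - m) := fun k m => mul_nonneg (hnn m) (hcon _)
  have hterm : ∀ k m : ℤ, c m * d (k - m) ≤ (LOne k).re := fun k m =>
    hasLSum_re_le (fun m => c m * d (k - m)) (hwnn k) (hprod k) m
  -- find `a` with `c a > 0` and `d (-a) > 0`
  have hex : ∃ a : ℤ, 0 < c a ∧ 0 < d (-a) := by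
    by_contra hno
    push_neg at hno
    have hz : ∀ m : ℤ, ((c m * d (0 - m) : ℝ) : ℂ) = 0 := by
      intro m
      rcases (hcon (-m)).eq_or_lt with hd0 | hd0
      · simp [← hd0]
      · have : c m = 0 := le_antisymm (le_of_not_gt fun h => absurd hd0 (not_lt_of_ge (by
          have := hno m h; simpa using this))) (hnn m)
        simp [this]
    obtain ⟨A, B, hA, hB, hL⟩ := hprod 0
    have hA0 : A = 0 := by
      have : Tendsto (fun _ : ℕ => (0:ℂ)) atTop (nhds A) := by
        refine hA.congr' ?_
        filter_upwards with N
        exact Finset.sum_eq_zero fun i _ => hz _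
      exact tendsto_nhds_unique this tendsto_const_nhds
    have hB0 : B = 0 := by
      have : Tendsto (fun _ : ℕ => (0:ℂ)) atTop (nhds B) := by
        refine hB.congr' ?_
        filter_upwards with N
        exact Finset.sum_eq_zero fun i _ => hz _
      exact tendsto_nhds_unique this tendsto_const_nhds
    rw [hA0, hB0] at hL
    simp [LOne] at hL
  obtain ⟨a, hca, hda⟩ := hex
  have key : ∀ n : ℤ, 0 < c n → n + (-a) = 0 := by
    intro n hcn
    by_contra hk
    have h1 := hterm (n + (-a)) n
    have h2 : (n + (-a)) - n = -a := by ring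
    rw [h2] at h1
    have h3 : (LOne (n + (-a))).re = 0 := by simp [LOne, hk]
    nlinarith [mul_pos hcn hda]
  have e1 := key n₁ hc1
  have e2 := key n₂ hc2
  omega
end

section
/- Let f = ∑_{n∈ℤ} c_n z^n be a formal Laurent series and let g = ∑_{n∈ℤ} d_n z^n be an inverse of f. For n, k ∈ ℕ set F(n,k) = ∑_{s=1}^{n} ∑_{m=−k}^{k} d_m c_{s−m}. Assume that for every k ∈ ℕ the limit lim_{n→∞} F(n,k) exists, and that the double limit lim_{(n,k)→∞} F(n,k) exists (F converges along the product filter atTop ×ˢ atTop on ℕ × ℕ). Then lim_{(n,k)→∞} F(n,k) = 0 and lim_{k→∞} lim_{n→∞} F(n,k) = 0. -/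
open Filter

/-- Summing an integer-indexed function over `Ico a (a + N)` is a range sum. -/
lemma sum_Ico_int (f : ℤ → ℂ) (a : ℤ) :
    ∀ N : ℕ, ∑ j ∈ Finset.Ico a (a + N), f j = ∑ n ∈ Finset.range N, f (a + n)
  | 0 => by simp
  | (N + 1) => by
    rw [Finset.sum_range_succ]
    have h1 : Finset.Ico a (a + (N + 1 : ℕ)) = insert (a + N) (Finset.Ico a (a + N)) := by
      ext x; simp [Finset.mem_Ico]; omega
    rw [h1, Finset.sum_insert (by simp), sum_Ico_int f a N]
    ring

/-- If a double limit exists along `atTop ×ˢ atTop` and all inner limits (in the second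
variable) exist, then the outer sequence of inner limits tends to the double limit. -/
lemma outer_limit {F : ℕ → ℕ → ℂ} {M : ℂ} {G : ℕ → ℂ}
    (hM : Tendsto (fun p : ℕ × ℕ => F p.1 p.2) (atTop ×ˢ atTop) (nhds M))
    (hG : ∀ n, Tendsto (F n) atTop (nhds (G n))) :
    Tendsto G atTop (nhds M) := by
  rw [Metric.tendsto_atTop]
  intro ε hε
  have h2 := hM (Metric.ball_mem_nhds M (by linarith : (0:ℝ) < ε / 2))
  rw [mem_map, Filter.mem_prod_iff] at h2
  obtain ⟨s, hs, t, ht, hst⟩ := h2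
  obtain ⟨N1, hN1⟩ := mem_atTop_sets.1 hs
  obtain ⟨N2, hN2⟩ := mem_atTop_sets.1 ht
  refine ⟨N1, fun n hn => ?_⟩
  have hle : dist (G n) M ≤ ε / 2 := by
    have hd : Tendsto (fun k => dist (F n k) M) atTop (nhds (dist (G n) M)) :=
      (hG n).dist tendsto_const_nhds
    refine le_of_tendsto hd (eventually_atTop.2 ⟨N2, fun k hk => ?_⟩)
    have hmem : ((n, k) : ℕ × ℕ) ∈ (fun p : ℕ × ℕ => F p.1 p.2) ⁻¹' Metric.ball M (ε / 2) :=
      hst (Set.mk_mem_prod (hN1 n hn) (hN2 k hk))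
    exact le_of_lt (Metric.mem_ball.1 hmem)
  linarith

/-- Let `g = ∑ d_n z^n` be an inverse of `f = ∑ c_n z^n` and set
`F n k = ∑_{s=1}^{n} ∑_{m=-k}^{k} d_m c_{s-m}`. If `lim_{n→∞} F n k` exists for every `k`
and the double limit of `F` along `atTop ×ˢ atTop` exists, then both the double limit and
the iterated limit `lim_{k→∞} lim_{n→∞} F n k` are `0`. -/
theorem stmt_10 (c d : ℤ → ℂ)
    (hinv : IsLInverse (fun n : ℤ => c n) (fun n : ℤ => d n))
    (F : ℕ → ℕ → ℂ)
    (hF : ∀ n k : ℕ, F n k =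
      ∑ s ∈ Finset.Icc 1 n, ∑ m ∈ Finset.Icc (-(k : ℤ)) (k : ℤ), d m * c ((s : ℤ) - m))
    (L : ℕ → ℂ) (hL : ∀ k : ℕ, Tendsto (fun n : ℕ => F n k) atTop (nhds (L k)))
    (M : ℂ) (hM : Tendsto (fun p : ℕ × ℕ => F p.1 p.2) (atTop ×ˢ atTop) (nhds M)) :
    M = 0 ∧ Tendsto L atTop (nhds 0) := by
  -- Step 1: for each fixed s ≥ 1, the symmetric inner sum tends to 0 as k → ∞.
  have key : ∀ s : ℕ, 1 ≤ s →
      Tendsto (fun k : ℕ => ∑ m ∈ Finset.Icc (-(k : ℤ)) (k : ℤ), d m * c ((s : ℤ) - m))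
        atTop (nhds 0) := by
    intro s hs
    obtain ⟨A, B, hA, hB, hAB⟩ := hinv (s : ℤ)
    set u : ℤ → ℂ := fun m => c m * d ((s : ℤ) - m) with hu
    have hS0 : LOne (s : ℤ) = 0 := by
      simp [LOne]; omega
    rw [hS0] at hAB
    -- rewrite the symmetric sum for k ≥ s
    have hrw : ∀ k : ℕ, s ≤ k →
        ∑ m ∈ Finset.Icc (-(k : ℤ)) (k : ℤ), d m * c ((s : ℤ) - m) =
        (∑ n ∈ Finset.range (k - s), u (-((n : ℤ) + 1))) +
        ∑ n ∈ Finset.range (s + k + 1), u (n : ℤ) := by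
      intro k hk
      have e1 : ∑ m ∈ Finset.Icc (-(k : ℤ)) (k : ℤ), d m * c ((s : ℤ) - m) =
          ∑ j ∈ Finset.Ico ((s : ℤ) - k) ((s : ℤ) + k + 1), u j := by
        refine Finset.sum_nbij' (fun m => (s : ℤ) - m) (fun j => (s : ℤ) - j) ?_ ?_ ?_ ?_ ?_
        · intro a ha; simp only [Finset.mem_Icc, Finset.mem_Ico] at *; omega
        · intro a ha; simp only [Finset.mem_Icc, Finset.mem_Ico] at *; omega
        · intro a _; ring
        · intro a _; ring
        · intro a _; simp only [hu]; ring_nf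
      have e2 : Finset.Ico ((s : ℤ) - k) ((s : ℤ) + k + 1) =
          Finset.Ico ((s : ℤ) - k) 0 ∪ Finset.Ico (0 : ℤ) ((s : ℤ) + k + 1) := by
        rw [Finset.Ico_union_Ico_eq_Ico (by omega) (by omega)]
      have e3 : ∑ j ∈ Finset.Ico ((s : ℤ) - k) 0, u j =
          ∑ n ∈ Finset.range (k - s), u (-((n : ℤ) + 1)) := by
        have h0 : (0 : ℤ) = ((s : ℤ) - k) + ((k - s : ℕ) : ℤ) := by omega
        rw [h0, sum_Ico_int u ((s : ℤ) - k) (k - s),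
          ← Finset.sum_range_reflect (fun n => u ((s : ℤ) - k + n)) (k - s)]
        refine Finset.sum_congr rfl fun n hn => ?_
        rw [Finset.mem_range] at hn
        congr 1
        omega
      have e4 : ∑ j ∈ Finset.Ico (0 : ℤ) ((s : ℤ) + k + 1), u j =
          ∑ n ∈ Finset.range (s + k + 1), u (n : ℤ) := by
        have h0 : (s : ℤ) + k + 1 = (0 : ℤ) + ((s + k + 1 : ℕ) : ℤ) := by push_cast; ring
        rw [h0, sum_Ico_int u 0 (s + k + 1)]
        exact Finset.sum_congr rfl fun n _ => by rw [zero_add]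
      rw [e1, e2, Finset.sum_union (Finset.Ico_disjoint_Ico_consecutive _ _ _), e3, e4]
    have h1 : Tendsto (fun k : ℕ => ∑ n ∈ Finset.range (k - s), u (-((n : ℤ) + 1)))
        atTop (nhds A) := hA.comp (tendsto_sub_atTop_nat s)
    have h2 : Tendsto (fun k : ℕ => ∑ n ∈ Finset.range (s + k + 1), u (n : ℤ))
        atTop (nhds B) := by
      refine hB.comp ?_
      refine tendsto_atTop_mono (fun k => ?_) tendsto_id
      simp only [id_eq]
      omega
    have := (h1.add h2)
    rw [← hAB] at this
    refine this.congr' ?_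
    filter_upwards [eventually_ge_atTop s] with k hk
    exact (hrw k hk).symm
  -- Step 2: for each fixed n, F n · → 0.
  have hinner : ∀ n : ℕ, Tendsto (fun k : ℕ => F n k) atTop (nhds 0) := by
    intro n
    have : Tendsto (fun k : ℕ => ∑ s ∈ Finset.Icc 1 n,
        ∑ m ∈ Finset.Icc (-(k : ℤ)) (k : ℤ), d m * c ((s : ℤ) - m)) atTop
        (nhds (∑ s ∈ Finset.Icc 1 n, (0 : ℂ))) := by
      refine tendsto_finset_sum _ fun s hs => ?_
      exact key s (Finset.mem_Icc.1 hs).1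
    simpa [hF] using this
  -- Step 3: combine.
  have hM0 : Tendsto (fun _ : ℕ => (0 : ℂ)) atTop (nhds M) :=
    outer_limit hM hinner
  have hMeq : M = 0 := tendsto_nhds_unique hM0 tendsto_const_nhds
  have hswap : Tendsto (fun p : ℕ × ℕ => F p.2 p.1) (atTop ×ˢ atTop) (nhds M) :=
    hM.comp (Tendsto.prodMk tendsto_snd tendsto_fst)
  have hLlim : Tendsto L atTop (nhds M) :=
    outer_limit hswap fun k => hL k
  exact ⟨hMeq, hMeq ▸ hLlim⟩
end

section
/- Let g = ∑_{n∈ℤ} b_n z^n be a formal Laurent series over ℂ with radii of convergence r = limsup_{n→∞} |b_{−n}|^{1/n} and R given by 1/R = limsup_{n→∞} |b_n|^{1/n}, and assume 0 < r < R < ∞. Suppose there exists a ∈ ℂ with |a| = R such that for every k ∈ ℕ∪{0} the series ∑_{n=0}^{∞} ((n+k)!/n!)·b_{n+k}·aⁿ converges (its partial sums tend to a limit in ℂ); that is, every formal derivative of the regular part g⁺ converges at a. Then for every k ∈ ℕ∪{0} and every z ∈ ℂ with r < |z| ≤ R, the k-th formal derivative g^{(k)} converges absolutely at z, i.e. the family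 (|(n+1)(n+2)⋯(n+k)·b_{n+k}·zⁿ|)_{n∈ℤ} is summable. -/
open Filter

/-- The inner radius of convergence `r = limsup_{n→∞} |b_{-n}|^{1/n}` (in `[0,∞]`). -/
noncomputable def innerRad (b : ℤ → ℂ) : ENNReal :=
  Filter.limsup (fun n : ℕ => ENNReal.ofReal (norm (b (-(n : ℤ)))) ^ (1 / (n : ℝ))) atTop

/-- The outer radius of convergence `R`, determined by `1/R = limsup_{n→∞} |b_n|^{1/n}`. -/
noncomputable def outerRad (b : ℤ → ℂ) : ENNReal :=
  (Filter.limsup (fun n : ℕ => ENNReal.ofReal (norm (b (n : ℤ))) ^ (1 / (n : ℝ))) atTop)⁻¹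

open Finset in
private lemma fact_prod16 (m k : ℕ) :
    (m + k).factorial = m.factorial * ∏ i ∈ range k, (m + i + 1) := by
  induction k with
  | zero => simp
  | succ k ih =>
    rw [Finset.prod_range_succ, ← Nat.add_assoc, Nat.factorial_succ, ih]
    ring

open Finset in
private lemma fact_div16 (m k : ℕ) :
    ((m + k).factorial / m.factorial : ℕ) = ∏ i ∈ range k, (m + i + 1) := by
  rw [fact_prod16, Nat.mul_div_cancel_left _ m.factorial_pos]

open Finset in
private lemma prod_shift16 (n k : ℕ) :
    (∏ i ∈ range (k+2), (n + i + 1)) = (n+1)*(n+2) * ∏ i ∈ range k, (n + 2 + i + 1) := by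
  have h1 := fact_prod16 n (k+2)
  have h2 := fact_prod16 (n+2) k
  have he : n + (k+2) = (n+2) + k := by ring
  rw [he, h2] at h1
  have h3 : (n+2).factorial = n.factorial * ((n+1)*(n+2)) := by
    rw [Nat.factorial_succ, Nat.factorial_succ]; ring
  rw [h3, mul_assoc] at h1
  exact Nat.eq_of_mul_eq_mul_left n.factorial_pos h1.symm

open Finset in
private lemma stepA16 (b : ℤ → ℂ) (a : ℂ) (j : ℕ) (L : ℂ)
    (hL : Tendsto (fun N : ℕ => ∑ n ∈ Finset.range N,
          (((n + j).factorial / n.factorial : ℕ) : ℂ) * b ((n : ℤ) + (j : ℤ)) * a ^ n)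
        atTop (nhds L)) :
    ∃ C : ℝ, ∀ m : ℕ,
      ((∏ i ∈ range j, (m + i + 1) : ℕ) : ℝ) * norm (b ((m:ℤ) + (j:ℤ))) *
        norm a ^ m ≤ C := by
  set t : ℕ → ℂ := fun m =>
    (((m + j).factorial / m.factorial : ℕ) : ℂ) * b ((m : ℤ) + (j : ℤ)) * a ^ m with ht
  have hterm : Tendsto t atTop (nhds 0) := by
    have h1 := (hL.comp (tendsto_add_atTop_nat 1)).sub hL
    simp only [Function.comp_def, Finset.sum_range_succ, sub_self, add_sub_cancel_left] at h1
    simpa using h1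
  obtain ⟨C, hC⟩ := (hterm.norm).bddAbove_range
  refine ⟨C, fun m => ?_⟩
  have := hC (Set.mem_range_self (f := fun m => ‖t m‖) m)
  rw [ht] at this
  simp only [norm_mul, norm_pow, map_pow] at this
  rwa [fact_div16, Complex.norm_natCast] at this

open Finset in
private lemma natPart16 (b : ℤ → ℂ) (z a : ℂ) (k : ℕ) (C : ℝ)
    (hzR : norm z ≤ norm a)
    (hC : ∀ m : ℕ, ((∏ i ∈ range (k+2), (m + i + 1) : ℕ) : ℝ) *
        norm (b ((m:ℤ) + ((k+2:ℕ):ℤ))) * norm a ^ m ≤ C) :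
    Summable (fun n : ℕ =>
      norm ((∏ i ∈ Finset.range k, ((((n:ℤ)) : ℂ) + (i : ℂ) + 1)) *
        b ((n:ℤ) + (k : ℤ)) * z ^ ((n:ℤ)))) := by
  set R := norm a with hR
  apply (summable_nat_add_iff 2).mp
  have hzR0 : (0:ℝ) ≤ norm z := norm_nonneg z
  have hC0 : 0 ≤ C := le_trans (by positivity) (hC 0)
  have hR0 : 0 ≤ R := norm_nonneg a
  have h0 : Summable (fun n : ℕ => (1:ℝ)/(n:ℝ)^2) := Real.summable_one_div_nat_pow.mpr one_lt_two
  have h1 : Summable (fun n : ℕ => (1:ℝ)/((n:ℝ)+1)^2) := by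
    have := (summable_nat_add_iff (f := fun n : ℕ => (1:ℝ)/(n:ℝ)^2) 1).mpr h0
    simpa using this
  have h2 : Summable (fun n : ℕ => (1:ℝ)/(((n:ℝ)+1)*((n:ℝ)+2))) := by
    refine h1.of_nonneg_of_le (fun n => by positivity) (fun n => ?_)
    apply one_div_le_one_div_of_le (by positivity)
    nlinarith [Nat.cast_nonneg (α := ℝ) n]
  have hg : Summable (fun n : ℕ => (C * R^2) * (1/(((n:ℝ)+1)*((n:ℝ)+2)))) := h2.mul_left _
  refine hg.of_nonneg_of_le (fun n => norm_nonneg _) (fun n => ?_)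
  obtain ⟨Q, hQdef⟩ : ∃ q : ℕ, q = ∏ i ∈ range k, (n + 2 + i + 1) := ⟨_, rfl⟩
  have hQ : (∏ i ∈ range k, ((((n + 2 : ℕ) : ℤ) : ℂ) + (i:ℂ) + 1)) = (Q : ℂ) := by
    rw [hQdef]; push_cast; rfl
  have hterm : norm ((∏ i ∈ Finset.range k, ((((n+2:ℕ):ℤ) : ℂ) + (i : ℂ) + 1)) *
      b (((n+2:ℕ):ℤ) + (k : ℤ)) * z ^ (((n+2:ℕ):ℤ)))
      = (Q:ℝ) * norm (b (((n+2:ℕ):ℤ) + (k : ℤ))) * norm z ^ (n+2) := by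
    rw [hQ, norm_mul, norm_mul, Complex.norm_natCast, zpow_natCast, norm_pow]
  rw [hterm]
  have hidx : (((n+2:ℕ):ℤ) + (k : ℤ)) = ((n:ℤ) + ((k+2:ℕ):ℤ)) := by push_cast; ring
  rw [hidx]
  have hB0 : 0 ≤ norm (b ((n:ℤ) + ((k+2:ℕ):ℤ))) := norm_nonneg _
  set B := norm (b ((n:ℤ) + ((k+2:ℕ):ℤ))) with hB
  have hkey := hC n
  rw [prod_shift16, ← hQdef] at hkey
  push_cast at hkey
  have hzpow : norm z ^ (n+2) ≤ R ^ (n+2) := pow_le_pow_left₀ hzR0 hzR _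
  have step1 : (Q:ℝ) * B * norm z ^ (n+2) ≤ (Q:ℝ) * B * R ^ (n+2) :=
    mul_le_mul_of_nonneg_left hzpow (by positivity)
  refine le_trans step1 ?_
  have hmul := mul_le_mul_of_nonneg_right hkey (by positivity : (0:ℝ) ≤ R^2)
  rw [mul_one_div, le_div_iff₀ (by positivity)]
  calc (Q:ℝ) * B * R^(n+2) * (((n:ℝ)+1)*((n:ℝ)+2))
      = (((n:ℝ)+1)*((n:ℝ)+2)*(Q:ℝ) * B * R^n) * R^2 := by rw [pow_add]; ring
    _ ≤ C * R^2 := hmul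

open Finset in
private lemma negPart16 (b : ℤ → ℂ) (z : ℂ) (k : ℕ) (ρ : ℝ) (hρ0 : 0 < ρ)
    (hρz : ρ < norm z)
    (hev : ∀ᶠ m : ℕ in atTop, norm (b (-(m:ℤ))) ≤ ρ ^ m) :
    Summable (fun n : ℕ =>
      norm ((∏ i ∈ range k, (((-((n:ℤ)+1) : ℤ) : ℂ) + (i:ℂ) + 1)) *
        b ((-((n:ℤ)+1)) + (k:ℤ)) * z ^ (-((n:ℤ)+1)))) := by
  have hz0 : (0:ℝ) < norm z := lt_trans hρ0 hρz
  set q : ℝ := ρ / norm z with hq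
  have hq0 : 0 ≤ q := by positivity
  have hq1 : ‖q‖ < 1 := by
    rw [Real.norm_eq_abs, abs_of_nonneg hq0]
    exact (div_lt_one hz0).mpr hρz
  have hsum0 : Summable (fun n : ℕ => (n:ℝ)^k * q^n) :=
    summable_pow_mul_geometric_of_norm_lt_one k hq1
  have hsum1 : Summable (fun n : ℕ => ((n:ℝ)+1)^k * q^(n+1)) := by
    have := (summable_nat_add_iff (f := fun n : ℕ => (n:ℝ)^k * q^n) 1).mpr hsum0
    simpa using this
  have hg : Summable (fun n : ℕ => (ρ⁻¹^k) * (((n:ℝ)+1)^k * q^(n+1))) := hsum1.mul_left _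
  obtain ⟨N, hN⟩ := eventually_atTop.mp hev
  apply Summable.of_norm_bounded_eventually_nat hg
  filter_upwards [eventually_ge_atTop (N + k)] with n hn
  have hkn : k ≤ n + 1 := by omega
  set m : ℕ := n + 1 - k with hm
  have hmN : N ≤ m := by omega
  have hidx : (-((n:ℤ)+1)) + (k:ℤ) = -(m:ℤ) := by
    have : (m:ℤ) = (n:ℤ) + 1 - (k:ℤ) := by
      rw [hm]; push_cast [Nat.cast_sub hkn]; ring
    omega
  rw [Real.norm_eq_abs, abs_of_nonneg (norm_nonneg _), hidx]
  have hA : norm (∏ i ∈ range k, (((-((n:ℤ)+1) : ℤ) : ℂ) + (i:ℂ) + 1))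
      ≤ ((n:ℝ)+1)^k := by
    rw [norm_prod]
    calc ∏ i ∈ range k, norm ((((-((n:ℤ)+1) : ℤ)) : ℂ) + (i:ℂ) + 1)
        ≤ ∏ _i ∈ range k, ((n:ℝ)+1) := by
          apply Finset.prod_le_prod (fun i _ => norm_nonneg _)
          intro i hi
          have hik : i < k := Finset.mem_range.mp hi
          have : ((((-((n:ℤ)+1) : ℤ)) : ℂ) + (i:ℂ) + 1) = (((i:ℝ) - (n:ℝ) : ℝ) : ℂ) := by
            push_cast; ring
          rw [this, Complex.norm_real, Real.norm_eq_abs, abs_le]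
          constructor <;> [skip; skip] <;>
            · have h1 : (i:ℝ) < (k:ℝ) := by exact_mod_cast hik
              have h2 : (k:ℝ) ≤ (n:ℝ) := by
                have : k ≤ n := by omega
                exact_mod_cast this
              have h3 : (0:ℝ) ≤ (i:ℝ) := Nat.cast_nonneg i
              linarith
      _ = ((n:ℝ)+1)^k := by rw [Finset.prod_const, Finset.card_range]
  have hB : norm (b (-(m:ℤ))) ≤ ρ^m := hN m hmN
  have hCeq : norm (z ^ (-((n:ℤ)+1))) = (norm z ^ (n+1))⁻¹ := by
    rw [norm_zpow]
    rw [show (-((n:ℤ)+1)) = -(((n+1:ℕ)):ℤ) by push_cast; ring]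
    rw [zpow_neg, zpow_natCast]
  rw [norm_mul, norm_mul, hCeq]
  have hBval : ρ ^ m = ρ^(n+1) * (ρ^k)⁻¹ := by
    rw [hm, pow_sub₀ ρ hρ0.ne' hkn]
  calc norm (∏ i ∈ range k, (((-((n:ℤ)+1) : ℤ) : ℂ) + (i:ℂ) + 1)) *
        norm (b (-(m:ℤ))) * (norm z ^ (n+1))⁻¹
      ≤ ((n:ℝ)+1)^k * (ρ^(n+1) * (ρ^k)⁻¹) * (norm z ^ (n+1))⁻¹ := by
        rw [← hBval]
        gcongr
    _ = (ρ⁻¹^k) * (((n:ℝ)+1)^k * q^(n+1)) := by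
        rw [hq, div_pow]
        field_simp
        rw [← mul_pow, mul_one_div_cancel hρ0.ne', one_pow]

/-- If every formal derivative of the regular part of `g` converges at some point `a` with
`|a| = R`, then every formal derivative `g^{(k)}` converges absolutely at each `z` with
`r < |z| ≤ R`. -/
theorem stmt_16 (b : ℤ → ℂ)
    (hr0 : 0 < innerRad b) (hrR : innerRad b < outerRad b) (hRtop : outerRad b < ⊤)
    (a : ℂ) (ha : ENNReal.ofReal (norm a) = outerRad b)
    (hconv : ∀ k : ℕ, ∃ L : ℂ,
      Tendsto (fun N : ℕ => ∑ n ∈ Finset.range N,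
          (((n + k).factorial / n.factorial : ℕ) : ℂ) * b ((n : ℤ) + (k : ℤ)) * a ^ n)
        atTop (nhds L)) :
    ∀ k : ℕ, ∀ z : ℂ,
      innerRad b < ENNReal.ofReal (norm z) →
      ENNReal.ofReal (norm z) ≤ outerRad b →
      Summable (fun n : ℤ =>
        norm ((∏ i ∈ Finset.range k, ((n : ℂ) + (i : ℂ) + 1)) * b (n + (k : ℤ)) * z ^ n)) := by
  intro k z hz1 hz2
  have hzR : norm z ≤ norm a := by
    rw [← ENNReal.ofReal_le_ofReal_iff (norm_nonneg a)]
    rw [ha]; exact hz2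
  -- the outer coefficient bound
  obtain ⟨L, hL⟩ := hconv (k + 2)
  obtain ⟨C, hC⟩ := stepA16 b a (k + 2) L hL
  -- the inner geometric bound
  obtain ⟨ρ, hρ0, hρz, hev⟩ : ∃ ρ : ℝ, 0 < ρ ∧ ρ < norm z ∧
      ∀ᶠ m : ℕ in atTop, norm (b (-(m:ℤ))) ≤ ρ ^ m := by
    simp only [innerRad] at hr0 hz1
    obtain ⟨c, hc1, hc2⟩ := exists_between hz1
    have hcT : c ≠ ⊤ := (hc2.trans_le le_top).ne
    refine ⟨c.toReal, ?_, ?_, ?_⟩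
    · exact ENNReal.toReal_pos (hr0.trans hc1).ne' hcT
    · exact (ENNReal.lt_ofReal_iff_toReal_lt hcT).mp hc2
    · have hlim : ∀ᶠ n : ℕ in atTop,
          ENNReal.ofReal (norm (b (-(n : ℤ)))) ^ (1 / (n : ℝ)) < c :=
        eventually_lt_of_limsup_lt hc1
      filter_upwards [hlim, eventually_ge_atTop 1] with n h1 h2
      have hn0 : (n:ℝ) ≠ 0 := by positivity
      have hpow := ENNReal.rpow_le_rpow h1.le (Nat.cast_nonneg (α := ℝ) n)
      rw [← ENNReal.rpow_mul, one_div_mul_cancel hn0, ENNReal.rpow_one] at hpow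
      have hcρ : c = ENNReal.ofReal c.toReal := (ENNReal.ofReal_toReal hcT).symm
      have hρ0 : 0 < c.toReal := ENNReal.toReal_pos (hr0.trans hc1).ne' hcT
      rw [hcρ, ENNReal.ofReal_rpow_of_pos hρ0] at hpow
      rw [ENNReal.ofReal_le_ofReal_iff (by positivity)] at hpow
      rwa [Real.rpow_natCast] at hpow
  exact Summable.of_nat_of_neg_add_one
    (natPart16 b z a k C hzR hC) (negPart16 b z k ρ hρ0 hρz hev)
end
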